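/- arXiv:1301.0958 — 14 statements merged into one kernel-verified Lean document; each statement's English description precedes it below -/
import Mathlib

section
/- If A|H ⊆ B|K (Goodman-Nguyen inclusion), then the quasi conjunction satisfies C(A|H, B|K) = (A∩H ∪ Hᶜ∩B∩K) | (H ∪ K). -/
/-- Goodman-Nguyen inclusion of conditional events `A|H ⊆ B|K`. -/
def GNIncl {Ω : Type*} (A H B K : Set Ω) : Prop :=
  A ∩ H ⊆ B ∩ K ∧ Bᶜ ∩ K ⊆ Aᶜ ∩ H

/-- If `A|H ⊆ B|K` then `C(A|H, B|K) = (A∩H ∪ Hᶜ∩B∩K) | (H ∪ K)`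
(equality of conditional events with the same antecedent `H ∪ K`,
i.e. equality of the consequents restricted to the antecedent). -/
theorem quasiConj_of_gn {Ω : Type*} (A H B K : Set Ω)
    (hH : H ≠ ∅) (hK : K ≠ ∅) (h : GNIncl A H B K) :
    ((A ∩ H ∪ Hᶜ) ∩ (B ∩ K ∪ Kᶜ)) ∩ (H ∪ K) =
      (A ∩ H ∪ Hᶜ ∩ B ∩ K) ∩ (H ∪ K) := by
  obtain ⟨h1, h2⟩ := h
  ext x
  have h1' := @h1 x
  have h2' := @h2 x
  simp only [Set.mem_inter_iff, Set.mem_union, Set.mem_compl_iff] at *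
  tauto
end

section
/- If A|H ⊆ B|K (Goodman-Nguyen inclusion), then A|H ⊆ C(A|H, B|K) ⊆ B|K, where C denotes quasi conjunction. -/
/-- If `A|H ⊆ B|K` then `A|H ⊆ C(A|H,B|K) ⊆ B|K`, where the quasi
conjunction is `((A∩H ∪ Hᶜ) ∩ (B∩K ∪ Kᶜ)) | (H ∪ K)`. -/
theorem gn_quasiConj_between {Ω : Type*} (A H B K : Set Ω)
    (hH : H ≠ ∅) (hK : K ≠ ∅) (h : GNIncl A H B K) :
    GNIncl A H ((A ∩ H ∪ Hᶜ) ∩ (B ∩ K ∪ Kᶜ)) (H ∪ K) ∧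
    GNIncl ((A ∩ H ∪ Hᶜ) ∩ (B ∩ K ∪ Kᶜ)) (H ∪ K) B K := by
  obtain ⟨h1, h2⟩ := h
  refine ⟨⟨?_, ?_⟩, ⟨?_, ?_⟩⟩ <;> intro x hx <;>
    have ha := @h1 x <;> have hb := @h2 x <;>
    simp only [Set.mem_inter_iff, Set.mem_union, Set.mem_compl_iff] at * <;>
    tauto
end

section
/- The class K is additive: if S' and S'' are nonempty subsets of a finite family F_n of conditional events such that C(S') ⊆ E|H and C(S'') ⊆ E|H (Goodman-Nguyen inclusion), then C(S' ∪ S'') ⊆ E|H. -/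
/-- Consequent of the quasi conjunction of `{E i | H i : i ∈ S}`. -/
def qcE {Ω ι : Type*} (E H : ι → Set Ω) (S : Finset ι) : Set Ω :=
  ⋂ i ∈ S, (E i ∩ H i ∪ (H i)ᶜ)

/-- Antecedent of the quasi conjunction of `{E i | H i : i ∈ S}`. -/
def qcH {Ω ι : Type*} (E H : ι → Set Ω) (S : Finset ι) : Set Ω :=
  ⋃ i ∈ S, H i

/-- Additivity of the class `K`: if `C(S') ⊆ E|H` and `C(S'') ⊆ E|H`
then `C(S' ∪ S'') ⊆ E|H`. -/
theorem classK_additive {Ω ι : Type*} [DecidableEq ι]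
    (Ev Hy : ι → Set Ω) (E H : Set Ω) (I S' S'' : Finset ι)
    (hne : ∀ i ∈ I, Hy i ≠ ∅)
    (hS' : S' ⊆ I) (hS'' : S'' ⊆ I)
    (hS'ne : S'.Nonempty) (hS''ne : S''.Nonempty)
    (h1 : GNIncl (qcE Ev Hy S') (qcH Ev Hy S') E H)
    (h2 : GNIncl (qcE Ev Hy S'') (qcH Ev Hy S'') E H) :
    GNIncl (qcE Ev Hy (S' ∪ S'')) (qcH Ev Hy (S' ∪ S'')) E H := by
  have hEq : qcE Ev Hy (S' ∪ S'') = qcE Ev Hy S' ∩ qcE Ev Hy S'' := by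
    ext x; simp [qcE]; aesop
  have hHq : qcH Ev Hy (S' ∪ S'') = qcH Ev Hy S' ∪ qcH Ev Hy S'' := by
    ext x; simp [qcH]; aesop
  constructor
  · intro x hx
    rw [hEq, hHq] at hx
    obtain ⟨⟨hx1, hx2⟩, hxH⟩ := hx
    rcases hxH with h | h
    · exact h1.1 ⟨hx1, h⟩
    · exact h2.1 ⟨hx2, h⟩
  · intro x hx
    have g1 := h1.2 hx
    have g2 := h2.2 hx
    rw [hEq, hHq]
    refine ⟨fun hc => g1.1 hc.1, Or.inl g1.2⟩
end

section
/- Let S and U be nonempty subsets of a finite family of conditional events with S strictly contained in U. If C(S) ⊆ E|H but C(U) ⊄ E|H (Goodman-Nguyen inclusion), then C(U \ S) ⊄ E|H. -/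
lemma qcE_anti {Ω ι : Type*} (Ev Hy : ι → Set Ω) {S U : Finset ι} (h : S ⊆ U) :
    qcE Ev Hy U ⊆ qcE Ev Hy S := by
  intro x hx
  simp only [qcE, Set.mem_iInter] at hx ⊢
  exact fun i hi => hx i (h hi)

lemma qcH_mono {Ω ι : Type*} (Ev Hy : ι → Set Ω) {S U : Finset ι} (h : S ⊆ U) :
    qcH Ev Hy S ⊆ qcH Ev Hy U := by
  intro x hx
  simp only [qcH, Set.mem_iUnion] at hx ⊢
  obtain ⟨i, hi, hxi⟩ := hx
  exact ⟨i, h hi, hxi⟩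

/-- If `S ⊂ U`, `C(S) ⊆ E|H` and `C(U) ⊄ E|H`, then `C(U \ S) ⊄ E|H`. -/
theorem classK_diff_not_mem {Ω ι : Type*} [DecidableEq ι]
    (Ev Hy : ι → Set Ω) (E H : Set Ω) (I S U : Finset ι)
    (hne : ∀ i ∈ I, Hy i ≠ ∅)
    (hSI : S ⊆ I) (hUI : U ⊆ I)
    (hSne : S.Nonempty) (hUne : U.Nonempty)
    (hSU : S ⊂ U)
    (h1 : GNIncl (qcE Ev Hy S) (qcH Ev Hy S) E H)
    (h2 : ¬ GNIncl (qcE Ev Hy U) (qcH Ev Hy U) E H) :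
    ¬ GNIncl (qcE Ev Hy (U \ S)) (qcH Ev Hy (U \ S)) E H := by
  intro h3
  apply h2
  constructor
  · intro x hx
    obtain ⟨hxE, hxH⟩ := hx
    simp only [qcH, Set.mem_iUnion] at hxH
    obtain ⟨i, hi, hxi⟩ := hxH
    by_cases hiS : i ∈ S
    · refine h1.1 ⟨qcE_anti Ev Hy hSU.subset hxE, ?_⟩
      simp only [qcH, Set.mem_iUnion]; exact ⟨i, hiS, hxi⟩
    · refine h3.1 ⟨qcE_anti Ev Hy (Finset.sdiff_subset) hxE, ?_⟩
      simp only [qcH, Set.mem_iUnion]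
      exact ⟨i, Finset.mem_sdiff.mpr ⟨hi, hiS⟩, hxi⟩
  · intro x hx
    obtain ⟨hxA, hxH⟩ := h1.2 hx
    refine ⟨fun hxU => hxA (qcE_anti Ev Hy hSU.subset hxU), qcH_mono Ev Hy hSU.subset hxH⟩
end

section
/- Let S and Γ be nonempty subfamilies of a finite family of conditional events such that C(S) ⊆ C(Γ) and C(S ∪ Γ) ⊆ E|H (Goodman-Nguyen inclusion). Then C(S) ⊆ E|H. -/
/-- If `C(S) ⊆ C(Γ)` and `C(S ∪ Γ) ⊆ E|H`, then `C(S) ⊆ E|H`. -/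
theorem gn_transfer {Ω ι : Type*} [DecidableEq ι]
    (Ev Hy : ι → Set Ω) (E H : Set Ω) (I S G : Finset ι)
    (hne : ∀ i ∈ I, Hy i ≠ ∅)
    (hSI : S ⊆ I) (hGI : G ⊆ I)
    (hSne : S.Nonempty) (hGne : G.Nonempty)
    (h1 : GNIncl (qcE Ev Hy S) (qcH Ev Hy S) (qcE Ev Hy G) (qcH Ev Hy G))
    (h2 : GNIncl (qcE Ev Hy (S ∪ G)) (qcH Ev Hy (S ∪ G)) E H) :
    GNIncl (qcE Ev Hy S) (qcH Ev Hy S) E H := by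
  obtain ⟨h11, h12⟩ := h1
  obtain ⟨h21, h22⟩ := h2
  have hEU : qcE Ev Hy (S ∪ G) = qcE Ev Hy S ∩ qcE Ev Hy G := by
    ext ω; simp [qcE, Set.mem_iInter, Finset.mem_union, or_imp, forall_and]
  have hHU : qcH Ev Hy (S ∪ G) = qcH Ev Hy S ∪ qcH Ev Hy G := by
    ext ω
    simp only [qcH, Set.mem_iUnion, Set.mem_union, Finset.mem_union]
    constructor
    · rintro ⟨i, hi | hi, hω⟩
      · exact Or.inl ⟨i, hi, hω⟩
      · exact Or.inr ⟨i, hi, hω⟩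
    · rintro (⟨i, hi, hω⟩ | ⟨i, hi, hω⟩)
      exacts [⟨i, Or.inl hi, hω⟩, ⟨i, Or.inr hi, hω⟩]
  -- if ω not in qcE S then ω in qcH S
  have key : ∀ ω : Ω, ω ∉ qcE Ev Hy S → ω ∈ qcH Ev Hy S := by
    intro ω hω
    simp only [qcE, Set.mem_iInter, Set.mem_union, Set.mem_inter_iff,
      Set.mem_compl_iff, not_forall] at hω
    obtain ⟨i, hi, h⟩ := hω
    push_neg at h
    exact Set.mem_iUnion₂.2 ⟨i, hi, h.2⟩
  constructor
  · intro ω hω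
    have hG : ω ∈ qcE Ev Hy G ∩ qcH Ev Hy G := h11 hω
    apply h21
    rw [hEU, hHU]
    exact ⟨⟨hω.1, hG.1⟩, Or.inl hω.2⟩
  · intro ω hω
    have h3 : ω ∈ (qcE Ev Hy (S ∪ G))ᶜ ∩ qcH Ev Hy (S ∪ G) := h22 hω
    rw [hEU, hHU] at h3
    obtain ⟨hnE, hH⟩ := h3
    have hnS : ω ∉ qcE Ev Hy S := by
      intro hES
      have hnEG : ω ∉ qcE Ev Hy G := fun hEG => hnE ⟨hES, hEG⟩
      rcases hH with hHS | hHG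
      · exact hnEG (h11 ⟨hES, hHS⟩).1
      · exact (h12 ⟨hnEG, hHG⟩).1 hES
    exact ⟨hnS, key ω hnS⟩
end

section
/- For any nonempty subfamilies S and Γ of a finite family of conditional events, if C(S) ⊆ C(Γ) (Goodman-Nguyen inclusion), then C(S) ⊆ C(S ∪ Γ) ⊆ C(Γ). -/
lemma mem_qcH_of_not_mem_qcE {Ω ι : Type*} (E H : ι → Set Ω) (S : Finset ι) {x : Ω}
    (hx : x ∉ qcE E H S) : x ∈ qcH E H S := by
  simp only [qcE, Set.mem_iInter, not_forall] at hx
  obtain ⟨i, hi, hxi⟩ := hx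
  simp only [Set.mem_union, Set.mem_compl_iff, not_or, not_not] at hxi
  exact Set.mem_biUnion hi hxi.2

lemma mem_qcE_union {Ω ι : Type*} [DecidableEq ι] (E H : ι → Set Ω) (S G : Finset ι) (x : Ω) :
    x ∈ qcE E H (S ∪ G) ↔ x ∈ qcE E H S ∧ x ∈ qcE E H G := by
  simp only [qcE, Set.mem_iInter, Finset.mem_union]
  constructor
  · exact fun h => ⟨fun i hi => h i (Or.inl hi), fun i hi => h i (Or.inr hi)⟩
  · rintro ⟨h1, h2⟩ i (hi | hi)
    exacts [h1 i hi, h2 i hi]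

lemma mem_qcH_union {Ω ι : Type*} [DecidableEq ι] (E H : ι → Set Ω) (S G : Finset ι) (x : Ω) :
    x ∈ qcH E H (S ∪ G) ↔ x ∈ qcH E H S ∨ x ∈ qcH E H G := by
  simp only [qcH, Set.mem_iUnion, Finset.mem_union]
  constructor
  · rintro ⟨i, hi | hi, hx⟩
    exacts [Or.inl ⟨i, hi, hx⟩, Or.inr ⟨i, hi, hx⟩]
  · rintro (⟨i, hi, hx⟩ | ⟨i, hi, hx⟩)
    exacts [⟨i, Or.inl hi, hx⟩, ⟨i, Or.inr hi, hx⟩]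

/-- If `C(S) ⊆ C(Γ)` then `C(S) ⊆ C(S ∪ Γ) ⊆ C(Γ)`. -/
theorem gn_union_between {Ω ι : Type*} [DecidableEq ι]
    (Ev Hy : ι → Set Ω) (I S G : Finset ι)
    (hne : ∀ i ∈ I, Hy i ≠ ∅)
    (hSI : S ⊆ I) (hGI : G ⊆ I)
    (hSne : S.Nonempty) (hGne : G.Nonempty)
    (h : GNIncl (qcE Ev Hy S) (qcH Ev Hy S) (qcE Ev Hy G) (qcH Ev Hy G)) :
    GNIncl (qcE Ev Hy S) (qcH Ev Hy S)
        (qcE Ev Hy (S ∪ G)) (qcH Ev Hy (S ∪ G)) ∧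
    GNIncl (qcE Ev Hy (S ∪ G)) (qcH Ev Hy (S ∪ G))
        (qcE Ev Hy G) (qcH Ev Hy G) := by
  obtain ⟨h1, h2⟩ := h
  refine ⟨⟨?_, ?_⟩, ⟨?_, ?_⟩⟩
  · -- qcE S ∩ qcH S ⊆ qcE (S∪G) ∩ qcH (S∪G)
    intro x hx
    have hG : x ∈ qcE Ev Hy G ∩ qcH Ev Hy G := h1 hx
    exact ⟨(mem_qcE_union Ev Hy S G x).2 ⟨hx.1, hG.1⟩,
      (mem_qcH_union Ev Hy S G x).2 (Or.inl hx.2)⟩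
  · -- (qcE (S∪G))ᶜ ∩ qcH (S∪G) ⊆ (qcE S)ᶜ ∩ qcH S
    rintro x ⟨hxE, _⟩
    rw [Set.mem_compl_iff, mem_qcE_union, not_and_or] at hxE
    rcases hxE with hxS | hxG
    · exact ⟨hxS, mem_qcH_of_not_mem_qcE Ev Hy S hxS⟩
    · exact h2 ⟨hxG, mem_qcH_of_not_mem_qcE Ev Hy G hxG⟩
  · -- qcE (S∪G) ∩ qcH (S∪G) ⊆ qcE G ∩ qcH G
    rintro x ⟨hxE, hxH⟩
    rw [mem_qcE_union] at hxE
    rw [mem_qcH_union] at hxH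
    rcases hxH with hxS | hxG
    · exact ⟨hxE.2, (h1 ⟨hxE.1, hxS⟩).2⟩
    · exact ⟨hxE.2, hxG⟩
  · -- (qcE G)ᶜ ∩ qcH G ⊆ (qcE (S∪G))ᶜ ∩ qcH (S∪G)
    rintro x ⟨hxE, hxH⟩
    refine ⟨?_, (mem_qcH_union Ev Hy S G x).2 (Or.inr hxH)⟩
    rw [Set.mem_compl_iff, mem_qcE_union, not_and_or]
    exact Or.inr hxE
end

section
/- If every conditional event E_i|H_i in a finite family F_n of n conditional events satisfies E_i|H_i ⊆ E|H (Goodman-Nguyen inclusion), then every nonempty subset S of F_n satisfies C(S) ⊆ E|H; consequently the class K(F_n, E|H) consists of all 2^n − 1 nonempty subsets of F_n. -/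
/-- If each `E_i|H_i ⊆ E|H`, then `C(S) ⊆ E|H` for every nonempty
`S ⊆ I`; consequently `K(F_n, E|H)` consists of all `2^n - 1` nonempty
subsets of `I` (where `n = I.card`). -/
theorem classK_full {Ω ι : Type*} [DecidableEq ι]
    (Ev Hy : ι → Set Ω) (E H : Set Ω) (I : Finset ι) (n : ℕ)
    (hcard : I.card = n)
    (hne : ∀ i ∈ I, Hy i ≠ ∅)
    (h : ∀ i ∈ I, GNIncl (Ev i) (Hy i) E H) :
    (∀ S : Finset ι, S ⊆ I → S.Nonempty →
        GNIncl (qcE Ev Hy S) (qcH Ev Hy S) E H) ∧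
    ({S : Finset ι | S ⊆ I ∧ S.Nonempty ∧
        GNIncl (qcE Ev Hy S) (qcH Ev Hy S) E H}.ncard = 2 ^ n - 1) := by
  have main : ∀ S : Finset ι, S ⊆ I → S.Nonempty →
      GNIncl (qcE Ev Hy S) (qcH Ev Hy S) E H := by
    intro S hSI ⟨i0, hi0⟩
    constructor
    · rintro x ⟨hxE, hxH⟩
      simp only [qcH, Set.mem_iUnion] at hxH
      obtain ⟨i, hiS, hxHi⟩ := hxH
      simp only [qcE, Set.mem_iInter] at hxE
      rcases hxE i hiS with hx | hx
      · exact (h i (hSI hiS)).1 hx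
      · exact absurd hxHi hx
    · rintro x ⟨hxE, hxH⟩
      have key : ∀ i ∈ S, x ∈ (Ev i)ᶜ ∩ Hy i := fun i hiS =>
        (h i (hSI hiS)).2 ⟨hxE, hxH⟩
      constructor
      · intro hx
        simp only [qcE, Set.mem_iInter] at hx
        rcases hx i0 hi0 with h1 | h1
        · exact (key i0 hi0).1 h1.1
        · exact h1 (key i0 hi0).2
      · simp only [qcH, Set.mem_iUnion]
        exact ⟨i0, hi0, (key i0 hi0).2⟩
  refine ⟨main, ?_⟩
  have hset : {S : Finset ι | S ⊆ I ∧ S.Nonempty ∧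
      GNIncl (qcE Ev Hy S) (qcH Ev Hy S) E H}
      = ↑(I.powerset.erase ∅) := by
    ext S
    simp only [Set.mem_setOf_eq, Finset.coe_erase, Set.mem_diff,
      Finset.mem_coe, Finset.mem_powerset, Set.mem_singleton_iff,
      ← Finset.nonempty_iff_ne_empty]
    refine ⟨fun ⟨h1, h2, _⟩ => ⟨h1, h2⟩, fun ⟨h1, h2⟩ => ⟨h1, h2, main S h1 h2⟩⟩
  rw [hset, Set.ncard_coe_finset, Finset.card_erase_of_mem
    (by simp), Finset.card_powerset, hcard]
end

section
/- Cut rule at the logical level: for events A, B, C, the quasi conjunction C(C|AB, B|A) equals BC|A, and BC|A ⊆ C|A in the Goodman-Nguyen sense. -/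
/-- Cut rule at the logical level: `C(C|AB, B|A) = BC|A` (equality of
conditional events) and `BC|A ⊆ C|A` in the Goodman-Nguyen sense. -/
theorem cut_rule {Ω : Type*} (A B C : Set Ω)
    (hAB : A ∩ B ≠ ∅) (hA : A ≠ ∅) :
    (((C ∩ (A ∩ B) ∪ (A ∩ B)ᶜ) ∩ (B ∩ A ∪ Aᶜ)) ∩ ((A ∩ B) ∪ A)
        = (B ∩ C) ∩ A
      ∧ (A ∩ B) ∪ A = A) ∧
    GNIncl (B ∩ C) A C A := by
  refine ⟨⟨?_, ?_⟩, ?_, ?_⟩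
  · ext x; simp only [Set.mem_inter_iff, Set.mem_union, Set.mem_compl_iff,
      Set.mem_inter_iff]; tauto
  · ext x; simp only [Set.mem_union, Set.mem_inter_iff]; tauto
  · intro x hx; exact ⟨hx.1.2, hx.2⟩
  · intro x hx; exact ⟨fun h => hx.1 h.2, hx.2⟩
end

section
/- Let P be a probability measure on a finite sample space Ω and let A|H, B|K be conditional events with P(H) > 0, P(K) > 0, P(H ∪ K) > 0. If A|H ⊆ B|K in the Goodman-Nguyen sense, then the conditional probabilities satisfy P(A|H) ≤ P(B|K). -/
open MeasureTheory

/-- Goodman-Nguyen inclusion implies the corresponding inequality of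
conditional probabilities. -/
theorem gn_implies_condProb_le {Ω : Type*} [Fintype Ω] [MeasurableSpace Ω]
    [MeasurableSingletonClass Ω]
    (μ : Measure Ω) [IsProbabilityMeasure μ]
    (A H B K : Set Ω)
    (hH : 0 < (μ H).toReal) (hK : 0 < (μ K).toReal)
    (hHK : 0 < (μ (H ∪ K)).toReal)
    (h : GNIncl A H B K) :
    (μ (A ∩ H)).toReal / (μ H).toReal ≤ (μ (B ∩ K)).toReal / (μ K).toReal := by
  obtain ⟨h1, h2⟩ := h
  have mA : MeasurableSet A := (Set.toFinite A).measurableSet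
  have mB : MeasurableSet B := (Set.toFinite B).measurableSet
  have fin : ∀ S : Set Ω, μ S ≠ ⊤ := fun S => measure_ne_top μ S
  -- abbreviations
  set a := (μ (A ∩ H)).toReal
  set b := (μ (B ∩ K)).toReal
  set hh := (μ H).toReal
  set kk := (μ K).toReal
  have hab : a ≤ b := ENNReal.toReal_mono (fin _) (measure_mono h1)
  have hcomp : (μ (Bᶜ ∩ K)).toReal ≤ (μ (Aᶜ ∩ H)).toReal :=
    ENNReal.toReal_mono (fin _) (measure_mono h2)
  have hKsplit : (μ (K ∩ B)).toReal + (μ (K \ B)).toReal = kk := by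
    rw [← ENNReal.toReal_add (fin _) (fin _), measure_inter_add_diff K mB]
  have hHsplit : (μ (H ∩ A)).toReal + (μ (H \ A)).toReal = hh := by
    rw [← ENNReal.toReal_add (fin _) (fin _), measure_inter_add_diff H mA]
  have e1 : μ (K ∩ B) = μ (B ∩ K) := by rw [Set.inter_comm]
  have e2 : μ (K \ B) = μ (Bᶜ ∩ K) := by rw [Set.diff_eq, Set.inter_comm]
  have e3 : μ (H ∩ A) = μ (A ∩ H) := by rw [Set.inter_comm]
  have e4 : μ (H \ A) = μ (Aᶜ ∩ H) := by rw [Set.diff_eq, Set.inter_comm]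
  rw [e1, e2] at hKsplit
  rw [e3, e4] at hHsplit
  have ha0 : 0 ≤ a := ENNReal.toReal_nonneg
  have haH : a ≤ hh := ENNReal.toReal_mono (fin _) (measure_mono Set.inter_subset_right)
  rw [div_le_div_iff₀ hH hK]
  nlinarith [hKsplit, hHsplit, hcomp, hab, ha0, haH]
end

section
/- Lower bound for quasi conjunction: let P be a probability measure on a finite sample space with P(H) > 0, P(K) > 0, and set x = P(A|H), y = P(B|K), z = P(C(A|H,B|K)) = P((A∩H∩B∩K) ∪ (A∩H∩Kᶜ) ∪ (Hᶜ∩B∩K)) / P(H ∪ K). Then z ≥ max(x + y − 1, 0) (the Łukasiewicz t-norm of x and y). -/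
open MeasureTheory Set

/-! Every point of `H ∪ K` lies in the quasi conjunction, in `H \ A`, or in `K \ B`, so
`P(H ∪ K) ≤ P(C) + P(H \ A) + P(K \ B)`. Since `H, K ⊆ H ∪ K`, the conditional probabilities
satisfy `P(A|H) ≤ 1 - P(H \ A) / P(H ∪ K)` and likewise for `B|K`; adding the two bounds gives
`P(A|H) + P(B|K) - 1 ≤ P(C) / P(H ∪ K)`. If `H ∪ K` is null, both conditional probabilities
are `0` by the convention `x / 0 = 0`, and the bound is trivial. -/

section

variable {Ω : Type*}

def quasiConjEvent (A H B K : Set Ω) : Set Ω :=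
  (A ∩ H ∩ B ∩ K) ∪ (A ∩ H ∩ Kᶜ) ∪ (Hᶜ ∩ B ∩ K)

lemma union_subset_quasiConjEvent_union_diff (A H B K : Set Ω) :
    H ∪ K ⊆ quasiConjEvent A H B K ∪ (H \ A) ∪ (K \ B) := by
  intro ω
  simp only [quasiConjEvent, mem_union, mem_inter_iff, mem_sdiff, mem_compl_iff]
  tauto

variable [MeasurableSpace Ω]

lemma measureReal_union_le_quasiConjEvent (μ : Measure Ω) [IsFiniteMeasure μ]
    (A H B K : Set Ω) :
    μ.real (H ∪ K) ≤ μ.real (quasiConjEvent A H B K) + μ.real (H \ A) + μ.real (K \ B) :=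
  calc μ.real (H ∪ K) ≤ μ.real (quasiConjEvent A H B K ∪ (H \ A) ∪ (K \ B)) :=
        measureReal_mono (union_subset_quasiConjEvent_union_diff A H B K)
    _ ≤ μ.real (quasiConjEvent A H B K ∪ (H \ A)) + μ.real (K \ B) := measureReal_union_le _ _
    _ ≤ μ.real (quasiConjEvent A H B K) + μ.real (H \ A) + μ.real (K \ B) := by
        gcongr; exact measureReal_union_le _ _

lemma measureReal_inter_div_le_one_sub (μ : Measure Ω) [IsFiniteMeasure μ] {A H S : Set Ω}
    (hA : MeasurableSet A) (hHS : H ⊆ S) :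
    μ.real (A ∩ H) / μ.real H ≤ 1 - μ.real (H \ A) / μ.real S := by
  have hsplit : μ.real (A ∩ H) + μ.real (H \ A) = μ.real H := by
    rw [inter_comm]; exact measureReal_inter_add_sdiff hA
  have hAH := measureReal_nonneg (μ := μ) (s := A ∩ H)
  have hHA := measureReal_nonneg (μ := μ) (s := H \ A)
  rcases measureReal_nonneg.eq_or_lt with hH | hH
  · have hHA0 : μ.real (H \ A) = 0 := by linarith
    simp [← hH, hHA0]
  · calc μ.real (A ∩ H) / μ.real H = 1 - μ.real (H \ A) / μ.real H := by
          rw [eq_sub_iff_add_eq, ← add_div, hsplit, div_self hH.ne']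
      _ ≤ 1 - μ.real (H \ A) / μ.real S :=
          sub_le_sub_left (div_le_div_of_nonneg_left hHA hH (measureReal_mono hHS)) 1

end

theorem quasiConj_lower_bound_general {Ω : Type*} [Fintype Ω] [MeasurableSpace Ω]
    [MeasurableSingletonClass Ω]
    (μ : Measure Ω) [IsProbabilityMeasure μ]
    (A H B K : Set Ω) :
    max ((μ (A ∩ H)).toReal / (μ H).toReal
          + (μ (B ∩ K)).toReal / (μ K).toReal - 1) 0
      ≤ (μ ((A ∩ H ∩ B ∩ K) ∪ (A ∩ H ∩ Kᶜ) ∪ (Hᶜ ∩ B ∩ K))).toReal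
          / (μ (H ∪ K)).toReal := by
  simp only [← measureReal_def]
  rw [← quasiConjEvent]
  refine max_le ?_ (by positivity)
  rcases measureReal_nonneg.eq_or_lt with hHK | hHK
  · have hH : μ.real H = 0 := measureReal_mono_null (subset_union_left : H ⊆ H ∪ K) hHK.symm
    have hK : μ.real K = 0 := measureReal_mono_null (subset_union_right : K ⊆ H ∪ K) hHK.symm
    simp only [hH, hK, div_zero]
    linarith [show 0 ≤ μ.real (quasiConjEvent A H B K) / μ.real (H ∪ K) by positivity]
  · have hx := measureReal_inter_div_le_one_sub μ A.toFinite.measurableSet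
      (subset_union_left : H ⊆ H ∪ K)
    have hy := measureReal_inter_div_le_one_sub μ B.toFinite.measurableSet
      (subset_union_right : K ⊆ H ∪ K)
    have hcover := measureReal_union_le_quasiConjEvent μ A H B K
    calc _ ≤ (μ.real (H ∪ K) - μ.real (H \ A) - μ.real (K \ B)) / μ.real (H ∪ K) := by
          rw [sub_div, sub_div, div_self hHK.ne']; linarith
      _ ≤ _ := by gcongr; linarith

/-- Lower bound for the probability of the quasi conjunction:
`z ≥ max (x + y - 1) 0` (Łukasiewicz t-norm). -/
theorem quasiConj_lower_bound {Ω : Type*} [Fintype Ω] [MeasurableSpace Ω]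
    [MeasurableSingletonClass Ω]
    (μ : Measure Ω) [IsProbabilityMeasure μ]
    (A H B K : Set Ω)
    (hH : 0 < (μ H).toReal) (hK : 0 < (μ K).toReal) :
    max ((μ (A ∩ H)).toReal / (μ H).toReal
          + (μ (B ∩ K)).toReal / (μ K).toReal - 1) 0
      ≤ (μ ((A ∩ H ∩ B ∩ K) ∪ (A ∩ H ∩ Kᶜ) ∪ (Hᶜ ∩ B ∩ K))).toReal
          / (μ (H ∪ K)).toReal :=
  quasiConj_lower_bound_general μ A H B K
end

section
/- Upper bound for quasi conjunction: let P be a probability measure on a finite sample space with P(H) > 0, P(K) > 0, and set x = P(A|H), y = P(B|K), z = P((A∩H∩B∩K) ∪ (A∩H∩Kᶜ) ∪ (Hᶜ∩B∩K)) / P(H ∪ K). If max(x, y) < 1 then z ≤ (x + y − 2xy)/(1 − xy) (the Hamacher t-conorm with parameter 0). -/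
open MeasureTheory

/-!
Write `h, k, c` for the probabilities of `H, K, H ∩ K` and `u` for that of `(A ∪ B) ∩ H ∩ K`.
By inclusion–exclusion the numerator is `x h + y k - u` and the denominator `h + k - c`, and
`u` is at least `0`, `c - (1 - x) h` and `c - (1 - y) k`, since `H ∩ K` minus `A` lies in `H \ A`
(resp. with `B`, `K`). Multiplied by `1 - x y`, the gap in the bound is exactly the combination
of these three lower bounds with the weights `(1 - x)(1 - y)`, `y (1 - x)`, `x (1 - y)`.
-/

lemma le_hamacher_of_lower_bounds {x y h k c u : ℝ} (hx₀ : 0 ≤ x) (hx₁ : x < 1)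
    (hy₀ : 0 ≤ y) (hy₁ : y < 1) (hm : 0 ≤ h + k - c) (hu₀ : 0 ≤ u)
    (hux : c - (1 - x) * h ≤ u) (huy : c - (1 - y) * k ≤ u) :
    (x * h + y * k - u) / (h + k - c) ≤ (x + y - 2 * x * y) / (1 - x * y) := by
  have hxy : 0 < 1 - x * y := by nlinarith
  have ht : 0 ≤ (x + y - 2 * x * y) / (1 - x * y) := by
    apply div_nonneg _ hxy.le
    nlinarith
  refine div_le_of_le_mul₀ hm ht ?_
  rw [div_mul_eq_mul_div, le_div_iff₀ hxy]
  linarith [mul_nonneg (mul_nonneg (sub_nonneg.2 hx₁.le) (sub_nonneg.2 hy₁.le)) hu₀,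
    mul_nonneg (mul_nonneg hy₀ (sub_nonneg.2 hx₁.le)) (sub_nonneg.2 hux),
    mul_nonneg (mul_nonneg hx₀ (sub_nonneg.2 hy₁.le)) (sub_nonneg.2 huy)]

section

variable {Ω : Type*} [MeasurableSpace Ω] (μ : Measure Ω) [IsFiniteMeasure μ]

lemma measureReal_inter_div_mul_cancel (A H : Set Ω) :
    μ.real (A ∩ H) / μ.real H * μ.real H = μ.real (A ∩ H) :=
  div_mul_cancel_of_imp fun h => measureReal_mono_null Set.inter_subset_right h

variable {μ}

lemma measureReal_quasiConj_add {A H B K : Set Ω} (hA : MeasurableSet A)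
    (hH : MeasurableSet H) (hB : MeasurableSet B) (hK : MeasurableSet K) :
    μ.real ((A ∩ H ∩ B ∩ K) ∪ (A ∩ H ∩ Kᶜ) ∪ (Hᶜ ∩ B ∩ K)) + μ.real ((A ∪ B) ∩ (H ∩ K))
      = μ.real (A ∩ H) + μ.real (B ∩ K) := by
  set Q := (A ∩ H ∩ B ∩ K) ∪ (A ∩ H ∩ Kᶜ) ∪ (Hᶜ ∩ B ∩ K)
  have hunion : Q ∪ (A ∪ B) ∩ (H ∩ K) = A ∩ H ∪ B ∩ K := by
    ext ω; simp only [Q, Set.mem_union, Set.mem_inter_iff, Set.mem_compl_iff]; tauto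
  have hinter : Q ∩ ((A ∪ B) ∩ (H ∩ K)) = A ∩ H ∩ (B ∩ K) := by
    ext ω; simp only [Q, Set.mem_union, Set.mem_inter_iff, Set.mem_compl_iff]; tauto
  rw [← measureReal_union_add_inter ((hA.union hB).inter (hH.inter hK)), hunion, hinter,
    measureReal_union_add_inter (hB.inter hK)]

lemma sub_le_measureReal_inter_inter {A H K : Set Ω} (hA : MeasurableSet A) :
    μ.real (H ∩ K) - (1 - μ.real (A ∩ H) / μ.real H) * μ.real H ≤ μ.real (A ∩ (H ∩ K)) := by
  have hsplit : μ.real (H \ A) + μ.real (A ∩ H) = μ.real H := by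
    rw [Set.inter_comm]; exact measureReal_sdiff_add_inter hA
  have hcover : μ.real (H ∩ K) ≤ μ.real (A ∩ (H ∩ K)) + μ.real (H \ A) :=
    (measureReal_mono fun ω hω => by by_cases h : ω ∈ A <;> simp_all).trans
      (measureReal_union_le _ _)
  rw [sub_mul, one_mul, measureReal_inter_div_mul_cancel]
  linarith

end

theorem quasiConj_upper_bound_general {Ω : Type*} [Fintype Ω] [MeasurableSpace Ω]
    [MeasurableSingletonClass Ω]
    (μ : Measure Ω) [IsProbabilityMeasure μ]
    (A H B K : Set Ω)
    (x y : ℝ)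
    (hx : x = (μ (A ∩ H)).toReal / (μ H).toReal)
    (hy : y = (μ (B ∩ K)).toReal / (μ K).toReal)
    (hmax : max x y < 1) :
    (μ ((A ∩ H ∩ B ∩ K) ∪ (A ∩ H ∩ Kᶜ) ∪ (Hᶜ ∩ B ∩ K))).toReal
        / (μ (H ∪ K)).toReal
      ≤ (x + y - 2 * x * y) / (1 - x * y) := by
  have hmeas (s : Set Ω) : MeasurableSet s := s.toFinite.measurableSet
  simp only [← measureReal_def] at hx hy ⊢
  have hxH : x * μ.real H = μ.real (A ∩ H) := hx ▸ measureReal_inter_div_mul_cancel μ A H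
  have hyK : y * μ.real K = μ.real (B ∩ K) := hy ▸ measureReal_inter_div_mul_cancel μ B K
  have hnum := measureReal_quasiConj_add (μ := μ) (hmeas A) (hmeas H) (hmeas B) (hmeas K)
  have hden := measureReal_union_add_inter (μ := μ) (s := H) (hmeas K)
  have hAx := hx ▸ sub_le_measureReal_inter_inter (μ := μ) (H := H) (K := K) (hmeas A)
  have hBy := hy ▸ sub_le_measureReal_inter_inter (μ := μ) (H := K) (K := H) (hmeas B)
  rw [Set.inter_comm K H] at hBy
  have hu : μ.real (A ∩ (H ∩ K)) ≤ μ.real ((A ∪ B) ∩ (H ∩ K)) ∧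
      μ.real (B ∩ (H ∩ K)) ≤ μ.real ((A ∪ B) ∩ (H ∩ K)) :=
    ⟨measureReal_mono (by gcongr; exact Set.subset_union_left),
      measureReal_mono (by gcongr; exact Set.subset_union_right)⟩
  have hm : 0 ≤ μ.real H + μ.real K - μ.real (H ∩ K) := by
    linarith [measureReal_nonneg (μ := μ) (s := H ∪ K)]
  rw [show μ.real (H ∪ K) = μ.real H + μ.real K - μ.real (H ∩ K) by linarith,
    show μ.real _ = x * μ.real H + y * μ.real K - μ.real ((A ∪ B) ∩ (H ∩ K)) by linarith]
  exact le_hamacher_of_lower_bounds (hx ▸ by positivity) (max_lt_iff.1 hmax).1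
    (hy ▸ by positivity) (max_lt_iff.1 hmax).2 hm measureReal_nonneg
    (hAx.trans hu.1) (hBy.trans hu.2)

/-- Upper bound for the probability of the quasi conjunction:
if `max x y < 1` then `z ≤ (x + y - 2xy)/(1 - xy)` (Hamacher t-conorm
with parameter 0). -/
theorem quasiConj_upper_bound {Ω : Type*} [Fintype Ω] [MeasurableSpace Ω]
    [MeasurableSingletonClass Ω]
    (μ : Measure Ω) [IsProbabilityMeasure μ]
    (A H B K : Set Ω)
    (hH : 0 < (μ H).toReal) (hK : 0 < (μ K).toReal)
    (x y : ℝ)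
    (hx : x = (μ (A ∩ H)).toReal / (μ H).toReal)
    (hy : y = (μ (B ∩ K)).toReal / (μ K).toReal)
    (hmax : max x y < 1) :
    (μ ((A ∩ H ∩ B ∩ K) ∪ (A ∩ H ∩ Kᶜ) ∪ (Hᶜ ∩ B ∩ K))).toReal
        / (μ (H ∪ K)).toReal
      ≤ (x + y - 2 * x * y) / (1 - x * y) :=
  quasiConj_upper_bound_general μ A H B K x y hx hy hmax
end

section
/- Quantitative QAND: let P be a probability measure on a finite sample space with P(H_i) > 0 for i = 1,…,n and set p_i = P(E_i|H_i), z = P(C(F_n)) (the conditional probability of the quasi conjunction). If p_1 + ⋯ + p_n ≥ n − ε for some ε ∈ [0,1], then z ≥ 1 − ε. -/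
open MeasureTheory

/-- Quantitative QAND: if `p_1 + ⋯ + p_n ≥ n - ε` with `ε ∈ [0,1]`, then
the conditional probability `z` of the quasi conjunction satisfies
`z ≥ 1 - ε`. -/
theorem qand_quantitative {Ω : Type*} [Fintype Ω] [MeasurableSpace Ω]
    [MeasurableSingletonClass Ω]
    (μ : Measure Ω) [IsProbabilityMeasure μ]
    (n : ℕ) (hn : 0 < n) (E H : Fin n → Set Ω)
    (hH : ∀ i, 0 < (μ (H i)).toReal)
    (p : Fin n → ℝ)
    (hp : ∀ i, p i = (μ (E i ∩ H i)).toReal / (μ (H i)).toReal)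
    (z : ℝ)
    (hz : z = (μ ((⋂ i, (E i ∩ H i ∪ (H i)ᶜ)) ∩ ⋃ i, H i)).toReal
              / (μ (⋃ i, H i)).toReal)
    (ε : ℝ) (hε0 : 0 ≤ ε) (hε1 : ε ≤ 1)
    (hsum : (n : ℝ) - ε ≤ ∑ i, p i) :
    1 - ε ≤ z := by
  classical
  have hmeas : ∀ s : Set Ω, MeasurableSet s := fun s => s.toFinite.measurableSet
  set S : Set Ω := ⋃ i, H i with hS
  set T : Set Ω := ⋂ i, (E i ∩ H i ∪ (H i)ᶜ) with hT
  have hnetop : ∀ s : Set Ω, μ s ≠ ⊤ := fun s => measure_ne_top μ s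
  -- real values
  set a : ℝ := (μ (T ∩ S)).toReal
  set b : ℝ := (μ S).toReal
  have hi0 : Fin n := ⟨0, hn⟩
  have hb : 0 < b := lt_of_lt_of_le (hH hi0)
    ((ENNReal.toReal_le_toReal (hnetop _) (hnetop _)).mpr
      (measure_mono (Set.subset_iUnion H hi0)))
  have hHb : ∀ i, (μ (H i)).toReal ≤ b := fun i =>
    (ENNReal.toReal_le_toReal (hnetop _) (hnetop _)).mpr
      (measure_mono (Set.subset_iUnion H i))
  -- split μ S
  have hsplit : μ (S ∩ T) + μ (S \ T) = μ S := measure_inter_add_diff S (hmeas T)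
  have hsplitR : a + (μ (S \ T)).toReal = b := by
    have ha' : a = (μ (S ∩ T)).toReal := by rw [Set.inter_comm]
    rw [ha', ← ENNReal.toReal_add (hnetop _) (hnetop _), hsplit]
  -- per-index split
  have hiR : ∀ i, (μ (E i ∩ H i)).toReal + (μ (H i \ E i)).toReal = (μ (H i)).toReal := by
    intro i
    have := measure_inter_add_diff (μ := μ) (H i) (hmeas (E i))
    rw [Set.inter_comm (H i) (E i)] at this
    rw [← ENNReal.toReal_add (hnetop _) (hnetop _), this]
  have hdiff : ∀ i, (μ (H i \ E i)).toReal = (1 - p i) * (μ (H i)).toReal := by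
    intro i
    rw [hp i]
    field_simp [(hH i).ne']
    linarith [hiR i]
  have hp1 : ∀ i, p i ≤ 1 := by
    intro i
    have h1 : 0 ≤ (μ (H i \ E i)).toReal := ENNReal.toReal_nonneg
    rw [hdiff i] at h1
    nlinarith [hH i]
  -- S \ T ⊆ ⋃ (H i \ E i)
  have hsub : S \ T ⊆ ⋃ i, (H i \ E i) := by
    intro x hx
    obtain ⟨_, hxT⟩ := hx
    rw [hT, Set.mem_iInter] at hxT
    push_neg at hxT
    obtain ⟨i, hi⟩ := hxT
    simp only [Set.mem_union, Set.mem_inter_iff, Set.mem_compl_iff, not_or, not_and,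
      not_not] at hi
    exact Set.mem_iUnion.mpr ⟨i, hi.2, fun hE => hi.1 hE hi.2⟩
  have hle : (μ (S \ T)).toReal ≤ ∑ i, (μ (H i \ E i)).toReal := by
    have h1 : μ (S \ T) ≤ ∑ i, μ (H i \ E i) :=
      (measure_mono hsub).trans (measure_iUnion_fintype_le μ _)
    calc (μ (S \ T)).toReal ≤ (∑ i, μ (H i \ E i)).toReal :=
          (ENNReal.toReal_le_toReal (hnetop _) (by
            exact (ENNReal.sum_lt_top.mpr (fun i _ => (hnetop _).lt_top)).ne)).mpr h1
      _ = ∑ i, (μ (H i \ E i)).toReal := ENNReal.toReal_sum fun i _ => hnetop _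
  have hle2 : (μ (S \ T)).toReal ≤ ε * b := by
    calc (μ (S \ T)).toReal ≤ ∑ i, (μ (H i \ E i)).toReal := hle
      _ ≤ ∑ i, (1 - p i) * b := by
          apply Finset.sum_le_sum
          intro i _
          rw [hdiff i]
          exact mul_le_mul_of_nonneg_left (hHb i) (by linarith [hp1 i])
      _ = ((n : ℝ) - ∑ i, p i) * b := by
          rw [← Finset.sum_mul, Finset.sum_sub_distrib]
          simp
      _ ≤ ε * b := by
          apply mul_le_mul_of_nonneg_right _ hb.le
          linarith
  -- conclude
  have ha : (1 - ε) * b ≤ a := by linarith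
  rw [hz]
  exact (le_div_iff₀ hb).mpr ha
end

section
/- Monotone transfer through Goodman-Nguyen inclusion for quasi conjunctions: let P be a probability measure on a finite sample space, let S be a nonempty finite family of conditional events E_i|H_i with P(H_i) > 0 and P(E_i|H_i) = 1 for all i, and let E|H be a conditional event with P(H) > 0 such that C(S) ⊆ E|H (Goodman-Nguyen). Then P(E|H) = 1. -/
open MeasureTheory

/-- Monotone transfer through Goodman-Nguyen inclusion for quasi
conjunctions: if `P(E_i|H_i) = 1` for all `i` and `C(S) ⊆ E|H`, then
`P(E|H) = 1`. -/
theorem gn_quasiConj_transfer {Ω : Type*} [Fintype Ω] [MeasurableSpace Ω]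
    [MeasurableSingletonClass Ω]
    (μ : Measure Ω) [IsProbabilityMeasure μ]
    (n : ℕ) (hn : 0 < n) (Ev Hy : Fin n → Set Ω)
    (E H : Set Ω)
    (hHi : ∀ i, 0 < (μ (Hy i)).toReal)
    (h1 : ∀ i, (μ (Ev i ∩ Hy i)).toReal / (μ (Hy i)).toReal = 1)
    (hH : 0 < (μ H).toReal)
    (hgn : GNIncl (⋂ i, (Ev i ∩ Hy i ∪ (Hy i)ᶜ)) (⋃ i, Hy i) E H) :
    (μ (E ∩ H)).toReal / (μ H).toReal = 1 := by
  classical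
  have hmeas : ∀ s : Set Ω, MeasurableSet s := fun s => s.toFinite.measurableSet
  have hN : ∀ i, μ ((Ev i ∩ Hy i ∪ (Hy i)ᶜ)ᶜ) = 0 := by
    intro i
    have h := h1 i
    have hne : (μ (Hy i)).toReal ≠ 0 := ne_of_gt (hHi i)
    have heq : (μ (Ev i ∩ Hy i)).toReal = (μ (Hy i)).toReal := by
      field_simp at h; linarith [h]
    have heq' : μ (Ev i ∩ Hy i) = μ (Hy i) :=
      (ENNReal.toReal_eq_toReal_iff' (measure_ne_top μ _) (measure_ne_top μ _)).mp heq
    have hset : (Ev i ∩ Hy i ∪ (Hy i)ᶜ)ᶜ = Hy i \ (Ev i ∩ Hy i) := by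
      ext x; simp [Set.mem_diff]; tauto
    rw [hset, measure_diff Set.inter_subset_right ((hmeas _).nullMeasurableSet)
      (measure_ne_top μ _), heq', tsub_self]
  have hnull : μ (Eᶜ ∩ H) = 0 := by
    apply measure_mono_null _ (measure_iUnion_null hN)
    intro x hx
    have hx1 := (hgn.2 hx).1
    rw [Set.compl_iInter] at hx1
    exact hx1
  have hEH : μ (E ∩ H) = μ H := by
    have hd : μ (H \ E) = 0 :=
      measure_mono_null (show H \ E ⊆ Eᶜ ∩ H from fun x hx => ⟨hx.2, hx.1⟩) hnull
    rw [Set.inter_comm, ← measure_inter_add_diff H (hmeas E), hd, add_zero]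
  rw [hEH, div_self (ne_of_gt hH)]
end

section
/- Truth/falsity behavior of quasi conjunction of two subfamily quasi conjunctions: for nonempty finite families S' and S'' of conditional events, at any ω ∈ Ω, if C(S' ∪ S'') is true at ω then C(S') is true at ω or C(S'') is true at ω; and if both C(S') and C(S'') are not false at ω and at least one is not void, then C(S' ∪ S'') is not false at ω. -/
/-- Truth/falsity behavior of the quasi conjunction of two subfamily quasi
conjunctions: if `C(S' ∪ S'')` is true at `ω`, then `C(S')` or `C(S'')` is
true at `ω`; and if both `C(S')`, `C(S'')` are not false at `ω` and at
least one is not void at `ω`, then `C(S' ∪ S'')` is not false at `ω`. -/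
theorem quasiConj_truth_falsity {Ω ι : Type*} [DecidableEq ι]
    (Ev Hy : ι → Set Ω) (S' S'' : Finset ι)
    (hS' : S'.Nonempty) (hS'' : S''.Nonempty) (ω : Ω) :
    (ω ∈ qcE Ev Hy (S' ∪ S'') ∩ qcH Ev Hy (S' ∪ S'') →
      ω ∈ qcE Ev Hy S' ∩ qcH Ev Hy S' ∨ ω ∈ qcE Ev Hy S'' ∩ qcH Ev Hy S'') ∧
    ((ω ∉ (qcE Ev Hy S')ᶜ ∩ qcH Ev Hy S') →
     (ω ∉ (qcE Ev Hy S'')ᶜ ∩ qcH Ev Hy S'') →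
     (ω ∈ qcH Ev Hy S' ∨ ω ∈ qcH Ev Hy S'') →
      ω ∉ (qcE Ev Hy (S' ∪ S''))ᶜ ∩ qcH Ev Hy (S' ∪ S'')) := by
  constructor
  · rintro ⟨hE, hH⟩
    simp only [qcE, qcH, Set.mem_iInter₂, Set.mem_iUnion₂, Set.mem_inter_iff,
      Finset.mem_union] at hE hH ⊢
    obtain ⟨i, hi, hHi⟩ := hH
    rcases hi with hi | hi
    · exact Or.inl ⟨fun j hj => hE j (Or.inl hj), i, hi, hHi⟩
    · exact Or.inr ⟨fun j hj => hE j (Or.inr hj), i, hi, hHi⟩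
  · intro h1 h2 h3 hbad
    obtain ⟨hE, hH⟩ := hbad
    rw [Set.mem_compl_iff] at hE
    simp only [qcE, qcH, Set.mem_compl_iff, Set.mem_iInter₂, Set.mem_iUnion₂, Set.mem_union,
      Set.mem_inter_iff, Finset.mem_union, not_and, not_forall,
      not_exists, not_or, not_not] at h1 h2 hE
    obtain ⟨i, hi, hni⟩ := hE
    rcases hi with hi | hi
    · exact h1 ⟨i, hi, hni⟩ i hi hni.2
    · exact h2 ⟨i, hi, hni⟩ i hi hni.2
end
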